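/- Let f : K → L be a homomorphism of commutative rings and let A be a K-module with a K-bilinear product. Equip L ⊗_K A with the induced L-bilinear product. Then there is an isomorphism of unital L-algebras L ⊗_K U_Alt,K(A) ≅ U_Alt,L(L ⊗_K A) carrying 1 ⊗ (class of l_a) to the class of l_{1⊗a} and 1 ⊗ (class of r_a) to the class of r_{1⊗a} for all a ∈ A. -/

import Mathlib

noncomputable section

open scoped TensorProduct

/-- `l_a ∈ Tens_R(A ⊕ A)`. -/
def lT (R A : Type) [CommRing R] [NonUnitalNonAssocRing A] [Module R A] (a : A) :
    TensorAlgebra R (A × A) :=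
  TensorAlgebra.ι R (a, 0)

/-- `r_a ∈ Tens_R(A ⊕ A)`. -/
def rT (R A : Type) [CommRing R] [NonUnitalNonAssocRing A] [Module R A] (a : A) :
    TensorAlgebra R (A × A) :=
  TensorAlgebra.ι R (0, a)

/-- The relations defining the alternative universal enveloping algebra `U_Alt(A)`:
quotienting `Tens_R(A ⊕ A)` by this relation is the same as quotienting by the two-sided
ideal generated by `l_{aa} − l_a·l_a`, `r_{bb} − r_b·r_b`,
`(l_{ab} − l_b·l_a) − (r_b·l_a − l_a·r_b)` and
`(r_b·l_a − l_a·r_b) − (r_a·r_b − r_{ab})` for all `a, b ∈ A`. -/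
inductive AltRel (R A : Type) [CommRing R] [NonUnitalNonAssocRing A] [Module R A] :
    TensorAlgebra R (A × A) → TensorAlgebra R (A × A) → Prop
  | lsq (a : A) : AltRel R A (lT R A (a * a)) (lT R A a * lT R A a)
  | rsq (b : A) : AltRel R A (rT R A (b * b)) (rT R A b * rT R A b)
  | lmid (a b : A) : AltRel R A (lT R A (a * b) - lT R A b * lT R A a)
      (rT R A b * lT R A a - lT R A a * rT R A b)
  | rmid (a b : A) : AltRel R A (rT R A b * lT R A a - lT R A a * rT R A b)
      (rT R A a * rT R A b - rT R A (a * b))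

/-- The alternative universal enveloping algebra `U_Alt(A)`. -/
def UAlt (R A : Type) [CommRing R] [NonUnitalNonAssocRing A] [Module R A] : Type :=
  RingQuot (AltRel R A)

instance (R A : Type) [CommRing R] [NonUnitalNonAssocRing A] [Module R A] :
    Ring (UAlt R A) :=
  inferInstanceAs (Ring (RingQuot (AltRel R A)))

instance (R A : Type) [CommRing R] [NonUnitalNonAssocRing A] [Module R A] :
    Algebra R (UAlt R A) :=
  inferInstanceAs (Algebra R (RingQuot (AltRel R A)))

/-- The image of `l_a` in `U_Alt(A)`. -/
def lUAlt (R A : Type) [CommRing R] [NonUnitalNonAssocRing A] [Module R A] (a : A) :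
    UAlt R A :=
  RingQuot.mkAlgHom R (AltRel R A) (lT R A a)

/-- The image of `r_a` in `U_Alt(A)`. -/
def rUAlt (R A : Type) [CommRing R] [NonUnitalNonAssocRing A] [Module R A] (a : A) :
    UAlt R A :=
  RingQuot.mkAlgHom R (AltRel R A) (rT R A a)

/-! Algebra maps out of `U_Alt(A)` are the pairs `(l, r)` of linear maps satisfying the four
defining identities. Over `K`, `a ↦ (l_{1⊗a}, r_{1⊗a})` is such a pair, and extending scalars gives
`L ⊗ U_Alt,K(A) → U_Alt,L(L ⊗ A)`. Conversely the base change of the universal pair to `L ⊗ A`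
is again such a pair, which gives the inverse: the two mixed identities are bilinear, so they
can be checked on pure tensors, and the two square identities hold on pure tensors and pass to
sums through their polarizations, which are bilinear. Both composites fix the generators. -/

structure IsAltPair {A B : Type} [NonUnitalNonAssocRing A] [Ring B] (l r : A → B) : Prop where
  lsq : ∀ a, l (a * a) = l a * l a
  rsq : ∀ b, r (b * b) = r b * r b
  lmid : ∀ a b, l (a * b) - l b * l a = r b * l a - l a * r b
  rmid : ∀ a b, r b * l a - l a * r b = r a * r b - r (a * b)

theorem IsAltPair.comp {A A' B : Type} [NonUnitalNonAssocRing A] [NonUnitalNonAssocRing A']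
    [Ring B] {l r : A → B} (h : IsAltPair l r) (φ : A' →ₙ* A) : IsAltPair (l ∘ φ) (r ∘ φ) where
  lsq a := by simp [h.lsq]
  rsq b := by simp [h.rsq]
  lmid a b := by simp [h.lmid]
  rmid a b := by simp [h.rmid]

namespace UAlt

variable (R A : Type) [CommRing R] [NonUnitalNonAssocRing A] [Module R A]

def lₗ : A →ₗ[R] UAlt R A :=
  (RingQuot.mkAlgHom R (AltRel R A)).toLinearMap ∘ₗ TensorAlgebra.ι R ∘ₗ LinearMap.inl R A A

def rₗ : A →ₗ[R] UAlt R A :=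
  (RingQuot.mkAlgHom R (AltRel R A)).toLinearMap ∘ₗ TensorAlgebra.ι R ∘ₗ LinearMap.inr R A A

@[simp] lemma lₗ_apply (a : A) : lₗ R A a = lUAlt R A a := rfl

@[simp] lemma rₗ_apply (a : A) : rₗ R A a = rUAlt R A a := rfl

theorem isAltPair : IsAltPair (lUAlt R A) (rUAlt R A) where
  lsq a := (RingQuot.mkAlgHom_rel R (AltRel.lsq a)).trans (map_mul _ _ _)
  rsq b := (RingQuot.mkAlgHom_rel R (AltRel.rsq b)).trans (map_mul _ _ _)
  lmid a b := by
    have h := RingQuot.mkAlgHom_rel R (AltRel.lmid (R := R) a b)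
    simp only [map_mul, map_sub] at h
    exact h
  rmid a b := by
    have h := RingQuot.mkAlgHom_rel R (AltRel.rmid (R := R) a b)
    simp only [map_mul, map_sub] at h
    exact h

variable {R A} {B : Type} [Ring B] [Algebra R B]

def lift {l r : A →ₗ[R] B} (h : IsAltPair l r) : UAlt R A →ₐ[R] B :=
  RingQuot.liftAlgHom R ⟨TensorAlgebra.lift R (l.coprod r), fun _ _ hxy => by
    cases hxy with
    | lsq a => simpa [lT] using h.lsq a
    | rsq b => simpa [rT] using h.rsq b
    | lmid a b => simpa [lT, rT] using h.lmid a b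
    | rmid a b => simpa [lT, rT] using h.rmid a b⟩

@[simp] theorem lift_lUAlt {l r : A →ₗ[R] B} (h : IsAltPair l r) (a : A) :
    lift h (lUAlt R A a) = l a :=
  (RingQuot.liftAlgHom_mkAlgHom_apply _ _ _ _).trans (by simp [lT])

@[simp] theorem lift_rUAlt {l r : A →ₗ[R] B} (h : IsAltPair l r) (a : A) :
    lift h (rUAlt R A a) = r a :=
  (RingQuot.liftAlgHom_mkAlgHom_apply _ _ _ _).trans (by simp [rT])

theorem algHom_ext {f g : UAlt R A →ₐ[R] B} (hl : ∀ a, f (lUAlt R A a) = g (lUAlt R A a))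
    (hr : ∀ a, f (rUAlt R A a) = g (rUAlt R A a)) : f = g := by
  apply RingQuot.ringQuot_ext'
  apply TensorAlgebra.hom_ext
  apply LinearMap.prod_ext <;> ext a
  exacts [hl a, hr a]

end UAlt

theorem map_mul_add_map_mul_of_map_mul_self {A B F : Type} [NonUnitalNonAssocRing A]
    [NonUnitalNonAssocRing B] [FunLike F A B] [AddMonoidHomClass F A B] (f : F)
    (hf : ∀ a, f (a * a) = f a * f a) (a b : A) :
    f (a * b) + f (b * a) = f a * f b + f b * f a := by
  have h := hf (a + b)
  simp only [mul_add, add_mul, map_add, hf] at h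
  linear_combination (norm := abel1) h

section BaseChange

open TensorProduct LinearMap

variable {K L A B : Type} [CommRing K] [CommRing L] [Algebra K L]
  [NonUnitalNonAssocRing A] [Module K A] [SMulCommClass K A A] [IsScalarTower K A A]
  [Ring B] [Algebra K B]

theorem LinearMap.baseChange_map_mul_self {f : A →ₗ[K] B} (hf : ∀ a, f (a * a) = f a * f a)
    (x : L ⊗[K] A) : f.baseChange L (x * x) = f.baseChange L x * f.baseChange L x := by
  have polar : (mul L (L ⊗[K] A)).compr₂ (f.baseChange L) +
      ((mul L (L ⊗[K] A)).compr₂ (f.baseChange L)).flip =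
      (mul L (L ⊗[K] B)).compl₁₂ (f.baseChange L) (f.baseChange L) +
      ((mul L (L ⊗[K] B)).compl₁₂ (f.baseChange L) (f.baseChange L)).flip := by
    ext a b
    simp [← tmul_add, map_mul_add_map_mul_of_map_mul_self f hf]
  induction x using TensorProduct.induction_on with
  | zero => simp
  | tmul l a => simp [hf]
  | add x y hx hy =>
    have hxy := congr_fun₂ polar x y
    simp only [add_apply, compr₂_apply, compl₁₂_apply, flip_apply, mul_apply'] at hxy
    simp only [mul_add, add_mul, map_add, hx, hy]
    linear_combination (norm := abel1) hxy

theorem IsAltPair.baseChange {l r : A →ₗ[K] B} (h : IsAltPair l r) :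
    IsAltPair (l.baseChange L) (r.baseChange L) where
  lsq := baseChange_map_mul_self h.lsq
  rsq := baseChange_map_mul_self h.rsq
  lmid x y := by
    have key : (mul L (L ⊗[K] A)).compr₂ (l.baseChange L) -
        ((mul L (L ⊗[K] B)).compl₁₂ (l.baseChange L) (l.baseChange L)).flip =
        ((mul L (L ⊗[K] B)).compl₁₂ (r.baseChange L) (l.baseChange L)).flip -
        (mul L (L ⊗[K] B)).compl₁₂ (l.baseChange L) (r.baseChange L) := by
      ext a b
      simp [← tmul_sub, h.lmid]
    simpa using congr_fun₂ key x y
  rmid x y := by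
    have key : ((mul L (L ⊗[K] B)).compl₁₂ (r.baseChange L) (l.baseChange L)).flip -
        (mul L (L ⊗[K] B)).compl₁₂ (l.baseChange L) (r.baseChange L) =
        (mul L (L ⊗[K] B)).compl₁₂ (r.baseChange L) (r.baseChange L) -
        (mul L (L ⊗[K] A)).compr₂ (r.baseChange L) := by
      ext a b
      simp [← tmul_sub, h.rmid]
    simpa using congr_fun₂ key x y

end BaseChange

namespace UAlt

open TensorProduct

variable (K L A : Type) [CommRing K] [CommRing L] [Algebra K L]
  [NonUnitalNonAssocRing A] [Module K A] [SMulCommClass K A A] [IsScalarTower K A A]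

instance : Algebra K (UAlt L (L ⊗[K] A)) :=
  inferInstanceAs (Algebra K (RingQuot (AltRel L (L ⊗[K] A))))

instance : IsScalarTower K L (UAlt L (L ⊗[K] A)) :=
  inferInstanceAs (IsScalarTower K L (RingQuot (AltRel L (L ⊗[K] A))))

def toBaseChange : UAlt L (L ⊗[K] A) →ₐ[L] L ⊗[K] UAlt K A :=
  lift (l := (lₗ K A).baseChange L) (r := (rₗ K A).baseChange L) (isAltPair K A).baseChange

theorem isAltPair_one_tmul :
    IsAltPair ((lₗ L (L ⊗[K] A)).restrictScalars K ∘ₗ TensorProduct.mk K L A 1)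
      ((rₗ L (L ⊗[K] A)).restrictScalars K ∘ₗ TensorProduct.mk K L A 1) :=
  (isAltPair L (L ⊗[K] A)).comp ⟨fun a => 1 ⊗ₜ a, fun a b => by simp⟩

def ofBaseChange : L ⊗[K] UAlt K A →ₐ[L] UAlt L (L ⊗[K] A) :=
  AlgHom.liftEquiv K L _ _ (lift (isAltPair_one_tmul K L A))

@[simp] theorem toBaseChange_lUAlt (x : L ⊗[K] A) :
    toBaseChange K L A (lUAlt L _ x) = (lₗ K A).baseChange L x :=
  lift_lUAlt _ x

@[simp] theorem toBaseChange_rUAlt (x : L ⊗[K] A) :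
    toBaseChange K L A (rUAlt L _ x) = (rₗ K A).baseChange L x :=
  lift_rUAlt _ x

@[simp] theorem ofBaseChange_tmul_lUAlt (c : L) (a : A) :
    ofBaseChange K L A (c ⊗ₜ lUAlt K A a) = lUAlt L _ (c ⊗ₜ a) := by
  rw [ofBaseChange, AlgHom.liftEquiv_tmul, lift_lUAlt, LinearMap.comp_apply, mk_apply,
    LinearMap.restrictScalars_apply, ← map_smul, smul_tmul', smul_eq_mul, mul_one, lₗ_apply]

@[simp] theorem ofBaseChange_tmul_rUAlt (c : L) (a : A) :
    ofBaseChange K L A (c ⊗ₜ rUAlt K A a) = rUAlt L _ (c ⊗ₜ a) := by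
  rw [ofBaseChange, AlgHom.liftEquiv_tmul, lift_rUAlt, LinearMap.comp_apply, mk_apply,
    LinearMap.restrictScalars_apply, ← map_smul, smul_tmul', smul_eq_mul, mul_one, rₗ_apply]

theorem ofBaseChange_comp_toBaseChange :
    (ofBaseChange K L A).comp (toBaseChange K L A) = AlgHom.id L _ := by
  refine algHom_ext (fun x => ?_) (fun x => ?_)
  · have h : (ofBaseChange K L A).toLinearMap ∘ₗ (lₗ K A).baseChange L = lₗ L _ := by
      ext a; simp
    simpa using LinearMap.congr_fun h x
  · have h : (ofBaseChange K L A).toLinearMap ∘ₗ (rₗ K A).baseChange L = rₗ L _ := by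
      ext a; simp
    simpa using LinearMap.congr_fun h x

theorem toBaseChange_comp_ofBaseChange :
    (toBaseChange K L A).comp (ofBaseChange K L A) = AlgHom.id L _ := by
  ext : 1
  exact algHom_ext (fun a => by simp) (fun a => by simp)

end UAlt

/-- Base change for the alternative universal enveloping algebra: for a ring map
`K → L` and a `K`-module `A` with `K`-bilinear product,
`L ⊗_K U_Alt,K(A) ≅ U_Alt,L(L ⊗_K A)` as unital `L`-algebras, carrying
`1 ⊗ l_a` to `l_{1⊗a}` and `1 ⊗ r_a` to `r_{1⊗a}`. -/
theorem uAlt_baseChange (K L A : Type) [CommRing K] [CommRing L] [Algebra K L]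
    [NonUnitalNonAssocRing A] [Module K A] [SMulCommClass K A A] [IsScalarTower K A A] :
    ∃ e : L ⊗[K] UAlt K A ≃ₐ[L] UAlt L (L ⊗[K] A),
      (∀ a : A, e (1 ⊗ₜ[K] lUAlt K A a) = lUAlt L (L ⊗[K] A) ((1 : L) ⊗ₜ[K] a)) ∧
      (∀ a : A, e (1 ⊗ₜ[K] rUAlt K A a) = rUAlt L (L ⊗[K] A) ((1 : L) ⊗ₜ[K] a)) :=
  ⟨AlgEquiv.ofAlgHom (UAlt.ofBaseChange K L A) (UAlt.toBaseChange K L A)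
      (UAlt.ofBaseChange_comp_toBaseChange K L A) (UAlt.toBaseChange_comp_ofBaseChange K L A),
    UAlt.ofBaseChange_tmul_lUAlt K L A 1, UAlt.ofBaseChange_tmul_rUAlt K L A 1⟩

end
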